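/- arXiv:1803.05351 — 3 statements merged into one kernel-verified Lean document; each statement's English description precedes it below -/
import Mathlib

section
/- Let P_0 ⊇ P_1 ⊇ ⋯ be a decreasing sequence of measurable sets with empty intersection in a measure space, let s_i ≥ 0, n ∈ ℕ, 1 ≤ p < ∞. Then ‖sup_{i≥0} 2^{in/p} s_i 1_{P_i}‖_{L_p}^p = ∑_{j=0}^∞ sup_{0≤i≤j}(2^{in} s_i^p) · μ(P_j ∖ P_{j+1}). -/
open Set MeasureTheory ENNReal

/-!
On each ring `P j \ P (j + 1)` the supremum equals `⨆ i ≤ j, 2^{in/p} s_i`, because exactly the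
sets `P 0, …, P j` contain the point, and it vanishes off `P 0`, which is the disjoint union of the
rings. Since `t ↦ t ^ p` commutes with suprema, integrating ring by ring gives the series.
-/

theorem lintegral_eq_tsum_mul_of_eqOn {X ι : Type*} [MeasurableSpace X] [Countable ι]
    {μ : Measure X} {A : ι → Set X} (hA : ∀ j, MeasurableSet (A j))
    (hdisj : Pairwise (Function.onFun Disjoint A)) {f : X → ℝ≥0∞}
    (hf : Function.support f ⊆ ⋃ j, A j) (b : ι → ℝ≥0∞) (hb : ∀ j, EqOn f (fun _ => b j) (A j)) :
    ∫⁻ x, f x ∂μ = ∑' j, b j * μ (A j) := by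
  rw [← setLIntegral_eq_of_support_subset hf, lintegral_iUnion hA hdisj]
  refine tsum_congr fun j => ?_
  rw [setLIntegral_congr_fun (hA j) (hb j), setLIntegral_const]

theorem Set.exists_mem_diff_succ {α : Type*} {P : ℕ → Set α} {x : α} {k : ℕ} (h0 : x ∈ P 0)
    (hk : x ∉ P k) : ∃ j, x ∈ P j \ P (j + 1) := by
  induction k with
  | zero => exact absurd h0 hk
  | succ k ih =>
    by_cases hxk : x ∈ P k
    · exact ⟨k, hxk, hk⟩
    · exact ih hxk

namespace Antitone

variable {α : Type*} {P : ℕ → Set α}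

theorem pairwise_disjoint_diff_succ (hP : Antitone P) :
    Pairwise (Function.onFun Disjoint fun j => P j \ P (j + 1)) :=
  (pairwise_disjoint_on _).2 fun _ _ hij =>
    disjoint_left.2 fun _ hi hj => hi.2 (hP (Nat.succ_le_of_lt hij) hj.1)

theorem iUnion_diff_succ (hP : Antitone P) (hempty : ⋂ j, P j = ∅) :
    ⋃ j, P j \ P (j + 1) = P 0 := by
  refine Subset.antisymm (iUnion_subset fun j => sdiff_subset.trans (hP (Nat.zero_le j))) ?_
  intro x hx0
  obtain ⟨k, hk⟩ : ∃ k, x ∉ P k := by simpa using eq_empty_iff_forall_notMem.1 hempty x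
  exact mem_iUnion.2 (exists_mem_diff_succ hx0 hk)

theorem mem_iff_le_of_mem_diff_succ (hP : Antitone P) {x : α} {i j : ℕ}
    (hx : x ∈ P j \ P (j + 1)) : x ∈ P i ↔ i ≤ j :=
  ⟨fun hi => not_lt.1 fun hji => hx.2 (hP (Nat.succ_le_of_lt hji) hi), fun hij => hP hij hx.1⟩

theorem iSup_mul_indicator_of_mem_diff_succ (hP : Antitone P) (c : ℕ → ℝ≥0∞) {x : α} {j : ℕ}
    (hx : x ∈ P j \ P (j + 1)) :
    ⨆ i, c i * (P i).indicator (fun _ => 1) x = ⨆ i ∈ Finset.range (j + 1), c i := by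
  refine iSup_congr fun i => ?_
  by_cases hij : i ≤ j
  · simp [hij, (hP.mem_iff_le_of_mem_diff_succ hx).2 hij]
  · simp [hij, mt (hP.mem_iff_le_of_mem_diff_succ hx).1 hij]

end Antitone

theorem ofReal_rpow_div_mul_rpow {b a p : ℝ} (t : ℝ) (hb : 0 ≤ b) (ha : 0 ≤ a) (hp : 0 < p) :
    ENNReal.ofReal (b ^ (t / p) * a) ^ p = ENNReal.ofReal (b ^ t * a ^ p) := by
  have hbt : 0 ≤ b ^ (t / p) := Real.rpow_nonneg hb _
  rw [ENNReal.ofReal_rpow_of_nonneg (mul_nonneg hbt ha) hp.le, Real.mul_rpow hbt ha,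
    ← Real.rpow_mul hb, div_mul_cancel₀ _ hp.ne']

/-- Let `P_0 ⊇ P_1 ⊇ ⋯` be a decreasing sequence of measurable sets with
empty intersection in a measure space, `s_i ≥ 0`, `n ∈ ℕ`, `1 ≤ p < ∞`. Then
`‖sup_i 2^{in/p} s_i 1_{P_i}‖_{L_p}^p = ∑_j sup_{0≤i≤j}(2^{in} s_i^p) · μ(P_j ∖ P_{j+1})`. -/
theorem lp_norm_sup_indicator {X : Type*} [MeasurableSpace X] (μ : Measure X)
    (P : ℕ → Set X) (hmeas : ∀ j, MeasurableSet (P j))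
    (hdec : ∀ j, P (j + 1) ⊆ P j) (hempty : ⋂ j, P j = ∅)
    (s : ℕ → ℝ) (hs : ∀ i, 0 ≤ s i) (n : ℕ) (p : ℝ) (hp : 1 ≤ p) :
    ∫⁻ x, (⨆ i : ℕ, ENNReal.ofReal ((2 : ℝ) ^ ((i : ℝ) * n / p) * s i) *
        (P i).indicator (fun _ => (1 : ℝ≥0∞)) x) ^ p ∂μ
      = ∑' j : ℕ, (⨆ i ∈ Finset.range (j + 1),
          ENNReal.ofReal ((2 : ℝ) ^ ((i : ℝ) * n) * s i ^ p)) * μ (P j \ P (j + 1)) := by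
  have hP : Antitone P := antitone_nat_of_succ_le hdec
  have hp0 : 0 < p := zero_lt_one.trans_le hp
  refine lintegral_eq_tsum_mul_of_eqOn (fun j => (hmeas j).diff (hmeas (j + 1)))
    hP.pairwise_disjoint_diff_succ ?_ _ fun j x hx => ?_
  · rw [hP.iUnion_diff_succ hempty]
    refine fun x hx => by_contra fun hx0 => hx ?_
    simp [indicator_of_notMem fun hxi => hx0 (hP (Nat.zero_le _) hxi), zero_rpow_of_pos hp0]
  · rw [hP.iSup_mul_indicator_of_mem_diff_succ _ hx]
    refine (map_iSup₂ (ENNReal.orderIsoRpow p hp0) _).trans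
      (iSup_congr fun i => iSup_congr fun _ => ?_)
    exact ofReal_rpow_div_mul_rpow _ zero_le_two (hs i) hp0
end

section
/- Let 1 ≤ p < ∞ and let (s_{j,k})_{j≥0, 0≤k≤H_j} be nonnegative reals with multiplicities H_{j,k} ≥ c · w · 2^{j(n−ñ)} for some w > 0 and all j,k. Then for s > ñ/p and any q with 1 ≤ q ≤ ∞: ∑_{j=0}^∞ 2^{-j(s−n/p)} s_{j,k_j} ≤ C w^{-1/p} (∑_{j=0}^∞ (∑_k H_{j,k} s_{j,k}^p)^{q/p})^{1/q} for any choice of indices k_j, with C independent of w and the sequence (usual modification for q = ∞). -/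
/-!
Put `ε = s - ñ/p > 0` and `A_j = c w 2^{j(n-ñ)}`. Since every multiplicity on level `j` is at
least `A_j`, one term of the level sum already gives `s_{j,k_j} ≤ A_j^{-1/p} b_j`, where
`b_j = (∑_k H_{j,k} s_{j,k}^p)^{1/p}` is at most the `ℓ_q`-norm `N` of `(b_j)`. The factor
`A_j^{-1/p}` turns `2^{-j(s-n/p)}` into `(c w)^{-1/p} 2^{-jε}`, so the left-hand side is dominated
by the geometric series `(c w)^{-1/p} N ∑_j 2^{-jε}`.
-/

open ENNReal

namespace ENNReal

theorem le_rpow_neg_inv_mul_rpow_inv {a x S : ℝ≥0∞} {p : ℝ} (hp : 0 < p) (ha₀ : a ≠ 0)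
    (ha : a ≠ ∞) (h : a * x ^ p ≤ S) : x ≤ a ^ (-1 / p) * S ^ (1 / p) := by
  have hax : (a * x ^ p) ^ (1 / p) = a ^ (1 / p) * x := by
    rw [mul_rpow_of_nonneg _ _ (by positivity), ← rpow_mul, mul_one_div_cancel hp.ne',
      rpow_one]
  calc x = a ^ (-1 / p) * (a * x ^ p) ^ (1 / p) := by
        rw [hax, ← mul_assoc, ← rpow_add _ _ ha₀ ha, neg_div, neg_add_cancel, rpow_zero,
          one_mul]
    _ ≤ a ^ (-1 / p) * S ^ (1 / p) := by gcongr

theorem rpow_inv_le_ite_iSup_tsum {S : ℕ → ℝ≥0∞} {p : ℝ} {q : ℝ≥0∞} (hp : 0 < p)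
    (hq : q ≠ 0) (j : ℕ) :
    S j ^ (1 / p) ≤ if q = ∞ then ⨆ i, S i ^ (1 / p)
      else (∑' i, S i ^ (q.toReal / p)) ^ (1 / q.toReal) := by
  split_ifs with hq'
  · exact le_iSup (fun i ↦ S i ^ (1 / p)) j
  have hq₀ : 0 < q.toReal := toReal_pos hq hq'
  calc S j ^ (1 / p) = (S j ^ (q.toReal / p)) ^ (1 / q.toReal) := by
        rw [← rpow_mul]; congr 1; field_simp
    _ ≤ (∑' i, S i ^ (q.toReal / p)) ^ (1 / q.toReal) := by gcongr; exact ENNReal.le_tsum j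

theorem ofReal_le_rpow_neg_inv_mul_sum_rpow_inv {ι : Type*} {t : Finset ι} {m : ι → ℕ}
    {f : ι → ℝ} {A p : ℝ} (hp : 0 < p) (hA : 0 < A) {i : ι} (hi : i ∈ t) (hAm : A ≤ m i) :
    ENNReal.ofReal (f i) ≤ ENNReal.ofReal A ^ (-1 / p) *
      (∑ k ∈ t, (m k : ℝ≥0∞) * ENNReal.ofReal (f k) ^ p) ^ (1 / p) := by
  refine le_rpow_neg_inv_mul_rpow_inv hp (by simpa using hA) ofReal_ne_top ?_
  refine le_trans ?_ (Finset.single_le_sum (f := fun k ↦ (m k : ℝ≥0∞) * ENNReal.ofReal (f k) ^ p)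
    (fun _ _ ↦ zero_le) hi)
  gcongr
  exact ofReal_natCast (m i) ▸ ofReal_le_ofReal hAm

theorem tsum_le_of_le_geometric {x : ℕ → ℝ≥0∞} {a N : ℝ≥0∞} {r : ℝ} (hr₀ : 0 ≤ r)
    (hr₁ : r < 1) (h : ∀ j, x j ≤ a * ENNReal.ofReal r ^ j * N) :
    ∑' j, x j ≤ a * ENNReal.ofReal (1 - r)⁻¹ * N := by
  calc ∑' j, x j ≤ ∑' j, a * ENNReal.ofReal r ^ j * N := ENNReal.tsum_le_tsum h
    _ = a * (1 - ENNReal.ofReal r)⁻¹ * N := by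
        rw [ENNReal.tsum_mul_right, ENNReal.tsum_mul_left, tsum_geometric]
    _ = a * ENNReal.ofReal (1 - r)⁻¹ * N := by
        rw [ofReal_inv_of_pos (by linarith), ofReal_sub _ hr₀, ofReal_one]

end ENNReal

theorem two_rpow_mul_rpow_neg_inv_eq {n nt p s c w : ℝ} (hp : 0 < p) (hc : 0 < c)
    (hw : 0 < w) (j : ℕ) :
    (2 : ℝ) ^ (-(j : ℝ) * (s - n / p)) * (c * w * (2 : ℝ) ^ ((j : ℝ) * (n - nt))) ^ (-1 / p)
      = c ^ (-1 / p) * w ^ (-1 / p) * ((2 : ℝ) ^ (-(s - nt / p))) ^ j := by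
  rw [Real.mul_rpow (by positivity) (by positivity), Real.mul_rpow hc.le hw.le,
    ← Real.rpow_natCast, ← Real.rpow_mul zero_le_two, ← Real.rpow_mul zero_le_two,
    mul_comm, mul_assoc, ← Real.rpow_add two_pos]
  congr 3
  field_simp
  ring

theorem ofReal_dyadic_term_le {n nt p s c w : ℝ} {t : Finset ℕ} {m : ℕ → ℕ} {f : ℕ → ℝ}
    (hp : 0 < p) (hc : 0 < c) (hw : 0 < w) (j : ℕ) {i : ℕ} (hi : i ∈ t)
    (hm : c * w * (2 : ℝ) ^ ((j : ℝ) * (n - nt)) ≤ m i) :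
    ENNReal.ofReal ((2 : ℝ) ^ (-(j : ℝ) * (s - n / p)) * f i)
      ≤ ENNReal.ofReal (c ^ (-1 / p) * w ^ (-1 / p)) *
          ENNReal.ofReal ((2 : ℝ) ^ (-(s - nt / p))) ^ j *
          (∑ k ∈ t, (m k : ℝ≥0∞) * ENNReal.ofReal (f k) ^ p) ^ (1 / p) := by
  have hA : 0 < c * w * (2 : ℝ) ^ ((j : ℝ) * (n - nt)) := by positivity
  calc ENNReal.ofReal ((2 : ℝ) ^ (-(j : ℝ) * (s - n / p)) * f i)
      ≤ ENNReal.ofReal ((2 : ℝ) ^ (-(j : ℝ) * (s - n / p))) *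
          (ENNReal.ofReal (c * w * (2 : ℝ) ^ ((j : ℝ) * (n - nt))) ^ (-1 / p) *
            (∑ k ∈ t, (m k : ℝ≥0∞) * ENNReal.ofReal (f k) ^ p) ^ (1 / p)) := by
        rw [ENNReal.ofReal_mul (by positivity)]
        gcongr
        exact ofReal_le_rpow_neg_inv_mul_sum_rpow_inv hp hA hi hm
    _ = _ := by
        rw [ofReal_rpow_of_pos hA, ← mul_assoc, ← ENNReal.ofReal_mul (by positivity),
          two_rpow_mul_rpow_neg_inv_eq hp hc hw, ENNReal.ofReal_mul (by positivity),
          ofReal_pow (by positivity)]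

theorem strauss_besov_sequence_estimate_general (n nt : ℕ)
    (p s c : ℝ) (hp : 1 ≤ p) (hc : 0 < c) (q : ℝ≥0∞) (hq : 1 ≤ q)
    (hs : (nt : ℝ) / p < s) :
    ∃ C : ℝ, 0 < C ∧
      ∀ w : ℝ, 0 < w →
      ∀ (H : ℕ → ℕ) (Hjk : ℕ → ℕ → ℕ),
        (∀ j k : ℕ, k ≤ H j → c * w * (2 : ℝ) ^ ((j : ℝ) * ((n : ℝ) - nt)) ≤ Hjk j k) →
      ∀ scoef : ℕ → ℕ → ℝ, (∀ j k, 0 ≤ scoef j k) →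
      ∀ kchoice : ℕ → ℕ, (∀ j, kchoice j ≤ H j) →
        ∑' j : ℕ, ENNReal.ofReal ((2 : ℝ) ^ (-(j : ℝ) * (s - (n : ℝ) / p)) * scoef j (kchoice j))
          ≤ ENNReal.ofReal C * ENNReal.ofReal (w ^ (-1 / p)) *
            (if q = ∞ then
              ⨆ j : ℕ, (∑ k ∈ Finset.range (H j + 1),
                  (Hjk j k : ℝ≥0∞) * ENNReal.ofReal (scoef j k) ^ p) ^ (1 / p)
            else
              (∑' j : ℕ, (∑ k ∈ Finset.range (H j + 1),
                  (Hjk j k : ℝ≥0∞) * ENNReal.ofReal (scoef j k) ^ p) ^ (q.toReal / p))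
                ^ (1 / q.toReal)) := by
  have hp₀ : 0 < p := by linarith
  set r : ℝ := (2 : ℝ) ^ (-(s - nt / p))
  have hr₀ : 0 < r := by positivity
  have hr₁ : r < 1 := Real.rpow_lt_one_of_one_lt_of_neg one_lt_two (by linarith)
  refine ⟨c ^ (-1 / p) * (1 - r)⁻¹, by positivity, ?_⟩
  intro w hw H Hjk hHjk scoef _ kchoice hkchoice
  set S : ℕ → ℝ≥0∞ := fun j ↦ ∑ k ∈ Finset.range (H j + 1),
    (Hjk j k : ℝ≥0∞) * ENNReal.ofReal (scoef j k) ^ p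
  set N := if q = ∞ then ⨆ j, S j ^ (1 / p) else (∑' j, S j ^ (q.toReal / p)) ^ (1 / q.toReal)
  calc _ ≤ ENNReal.ofReal (c ^ (-1 / p) * w ^ (-1 / p)) * ENNReal.ofReal (1 - r)⁻¹ * N := by
        refine tsum_le_of_le_geometric hr₀.le hr₁ fun j ↦ ?_
        refine (ofReal_dyadic_term_le hp₀ hc hw j (Finset.mem_range_succ_iff.mpr (hkchoice j))
          (hHjk j _ (hkchoice j))).trans ?_
        gcongr
        exact rpow_inv_le_ite_iSup_tsum hp₀ (one_pos.trans_le hq).ne' j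
    _ = _ := by
        rw [ENNReal.ofReal_mul (by positivity), ENNReal.ofReal_mul (by positivity)]
        ring

/-- Let `1 ≤ p < ∞` and let `(s_{j,k})_{j≥0, 0≤k≤H_j}` be nonnegative
reals with multiplicities `H_{j,k} ≥ c·w·2^{j(n−ñ)}` for some `w > 0` and all `j,k`.
Then for `s > ñ/p` and any `1 ≤ q ≤ ∞` (with the `ℓ_q`-modification for `q = ∞`):
`∑_j 2^{-j(s−n/p)} s_{j,k_j} ≤ C w^{-1/p} (∑_j (∑_k H_{j,k} s_{j,k}^p)^{q/p})^{1/q}`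
for any choice of indices `k_j`, with `C` independent of `w` and the sequence.
Here `nt` plays the role of `ñ`; sums and norms are taken in `[0,∞]`. -/
theorem strauss_besov_sequence_estimate (n nt : ℕ) (hnt : nt ≤ n)
    (p s c : ℝ) (hp : 1 ≤ p) (hc : 0 < c) (q : ℝ≥0∞) (hq : 1 ≤ q)
    (hs : (nt : ℝ) / p < s) :
    ∃ C : ℝ, 0 < C ∧
      ∀ w : ℝ, 0 < w →
      ∀ (H : ℕ → ℕ) (Hjk : ℕ → ℕ → ℕ),
        (∀ j k : ℕ, k ≤ H j → c * w * (2 : ℝ) ^ ((j : ℝ) * ((n : ℝ) - nt)) ≤ Hjk j k) →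
      ∀ scoef : ℕ → ℕ → ℝ, (∀ j k, 0 ≤ scoef j k) →
      ∀ kchoice : ℕ → ℕ, (∀ j, kchoice j ≤ H j) →
        ∑' j : ℕ, ENNReal.ofReal ((2 : ℝ) ^ (-(j : ℝ) * (s - (n : ℝ) / p)) * scoef j (kchoice j))
          ≤ ENNReal.ofReal C * ENNReal.ofReal (w ^ (-1 / p)) *
            (if q = ∞ then
              ⨆ j : ℕ, (∑ k ∈ Finset.range (H j + 1),
                  (Hjk j k : ℝ≥0∞) * ENNReal.ofReal (scoef j k) ^ p) ^ (1 / p)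
            else
              (∑' j : ℕ, (∑ k ∈ Finset.range (H j + 1),
                  (Hjk j k : ℝ≥0∞) * ENNReal.ofReal (scoef j k) ^ p) ^ (q.toReal / p))
                ^ (1 / q.toReal)) :=
  strauss_besov_sequence_estimate_general n nt p s c hp hc q hq hs
end

section
/- Let μ be a measure, let (P_{j})_{j≥0} be a decreasing sequence of measurable sets such that μ(P_j ∖ P_{j+1}) ≥ c·2^{−jn}·H_j for positive reals H_j satisfying H_{j} ≥ c'·w·2^{j(n−ñ)}, and let s_j ≥ 0. Then for 1 ≤ p < ∞: ∑_{j=0}^∞ 2^{−j(s−ñ/p)} H_j^{1/p} s_j ≤ C·(∑_{j=0}^∞ sup_{0≤i≤j}(2^{in}s_i^p)·μ(P_j ∖ P_{j+1}))^{1/p} whenever s > ñ/p (Hölder in j) or s = ñ/p, p = 1, with C independent of w and (s_j). -/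
open MeasureTheory ENNReal

/-- Let `μ` be a measure, `(P_j)` a decreasing sequence of measurable
sets with `μ(P_j ∖ P_{j+1}) ≥ c·2^{−jn}·H_j`, where `H_j ≥ c'·w·2^{j(n−ñ)}` with `w > 0`,
and `s_j ≥ 0`. Then for `1 ≤ p < ∞` and `s > ñ/p` (or `s = ñ/p`, `p = 1`):
`∑_j 2^{−j(s−ñ/p)} H_j^{1/p} s_j ≤ C·(∑_j sup_{0≤i≤j}(2^{in}s_i^p)·μ(P_j∖P_{j+1}))^{1/p}`
with `C` independent of `w` and `(s_j)`. Here `nt` plays the role of `ñ` and both sides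
are interpreted in `[0,∞]`. -/
theorem strauss_triebel_lizorkin_sequence_estimate {X : Type*} [MeasurableSpace X]
    (μ : Measure X) (P : ℕ → Set X) (hmeas : ∀ j, MeasurableSet (P j))
    (hdec : ∀ j, P (j + 1) ⊆ P j)
    (n nt : ℕ) (hnt : nt ≤ n) (p s c c' : ℝ) (hp : 1 ≤ p)
    (hc : 0 < c) (hc' : 0 < c')
    (hcase : (nt : ℝ) / p < s ∨ (s = (nt : ℝ) / p ∧ p = 1)) :
    ∃ C : ℝ, 0 < C ∧
      ∀ w : ℝ, 0 < w →
      ∀ H : ℕ → ℝ,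
        (∀ j : ℕ, c' * w * (2 : ℝ) ^ ((j : ℝ) * ((n : ℝ) - nt)) ≤ H j) →
        (∀ j : ℕ, ENNReal.ofReal (c * (2 : ℝ) ^ (-(j : ℝ) * n) * H j) ≤ μ (P j \ P (j + 1))) →
      ∀ sseq : ℕ → ℝ, (∀ j, 0 ≤ sseq j) →
        ∑' j : ℕ, ENNReal.ofReal
            ((2 : ℝ) ^ (-(j : ℝ) * (s - (nt : ℝ) / p)) * H j ^ (1 / p) * sseq j)
          ≤ ENNReal.ofReal C *
            (∑' j : ℕ, (⨆ i ∈ Finset.range (j + 1),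
                ENNReal.ofReal ((2 : ℝ) ^ ((i : ℝ) * n) * sseq i ^ p)) *
              μ (P j \ P (j + 1))) ^ (1 / p) := by
  have hp0 : 0 < p := lt_of_lt_of_le one_pos hp
  set α : ℝ := s - (nt : ℝ) / p with hα
  -- Step 1 (Hölder / geometric series): a uniform constant `C₀` with
  -- `∑ 2^{-jα} a_j^{1/p} ≤ C₀ (∑ a_j)^{1/p}`.
  obtain ⟨C₀, hC₀pos, hC₀⟩ :
      ∃ C₀ : ℝ, 0 < C₀ ∧ ∀ a : ℕ → ℝ, (∀ j, 0 ≤ a j) →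
        ∑' j : ℕ, ENNReal.ofReal ((2 : ℝ) ^ (-(j : ℝ) * α) * (a j) ^ (1 / p))
          ≤ ENNReal.ofReal C₀ * (∑' j : ℕ, ENNReal.ofReal (a j)) ^ (1 / p) := by
    rcases hcase with hs | ⟨hs, hp1⟩
    · have hα0 : 0 < α := sub_pos.mpr hs
      set r : ℝ := (2 : ℝ) ^ (-α) with hr
      have hr0 : 0 ≤ r := (Real.rpow_pos_of_pos two_pos _).le
      have hr1 : r < 1 :=
        Real.rpow_lt_one_of_one_lt_of_neg one_lt_two (by linarith)
      refine ⟨(1 - r)⁻¹, inv_pos.mpr (by linarith), ?_⟩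
      intro a ha
      set A := ∑' j : ℕ, ENNReal.ofReal (a j) with hA
      have hterm : ∀ j : ℕ,
          ENNReal.ofReal ((2 : ℝ) ^ (-(j : ℝ) * α) * (a j) ^ (1 / p))
            ≤ ENNReal.ofReal r ^ j * A ^ (1 / p) := by
        intro j
        rw [ENNReal.ofReal_mul (by positivity)]
        have h1 : ENNReal.ofReal ((2 : ℝ) ^ (-(j : ℝ) * α)) = ENNReal.ofReal r ^ j := by
          rw [← ENNReal.ofReal_pow hr0]
          congr 1
          rw [hr, ← Real.rpow_natCast ((2 : ℝ) ^ (-α)) j,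
            ← Real.rpow_mul (by norm_num : (0 : ℝ) ≤ 2)]
          ring_nf
        rw [h1]
        gcongr
        rw [← ENNReal.ofReal_rpow_of_nonneg (ha j) (by positivity)]
        gcongr
        exact ENNReal.le_tsum j
      calc ∑' j : ℕ, ENNReal.ofReal ((2 : ℝ) ^ (-(j : ℝ) * α) * (a j) ^ (1 / p))
          ≤ ∑' j : ℕ, ENNReal.ofReal r ^ j * A ^ (1 / p) := ENNReal.tsum_le_tsum hterm
        _ = (∑' j : ℕ, ENNReal.ofReal r ^ j) * A ^ (1 / p) := ENNReal.tsum_mul_right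
        _ = (1 - ENNReal.ofReal r)⁻¹ * A ^ (1 / p) := by rw [ENNReal.tsum_geometric]
        _ = ENNReal.ofReal (1 - r)⁻¹ * A ^ (1 / p) := by
            rw [ENNReal.ofReal_inv_of_pos (by linarith), ENNReal.ofReal_sub _ hr0,
              ENNReal.ofReal_one]
    · refine ⟨1, one_pos, ?_⟩
      intro a ha
      have hα0 : α = 0 := by rw [hα, hs]; ring
      simp only [hα0, mul_zero, Real.rpow_zero, one_mul, hp1, div_one, Real.rpow_one,
        ENNReal.ofReal_one, ENNReal.rpow_one]
      exact le_refl _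
  refine ⟨C₀ * c⁻¹ ^ (1 / p), by positivity, ?_⟩
  intro w hw H hHlow hHμ sseq hs0
  have hH0 : ∀ j, 0 ≤ H j := fun j => le_trans (by positivity) (hHlow j)
  set a : ℕ → ℝ := fun j => H j * sseq j ^ p with ha
  have ha0 : ∀ j, 0 ≤ a j := fun j => mul_nonneg (hH0 j) (Real.rpow_nonneg (hs0 j) p)
  -- rewrite the terms of the left-hand side
  have hterm : ∀ j : ℕ, (2 : ℝ) ^ (-(j : ℝ) * α) * H j ^ (1 / p) * sseq j
      = (2 : ℝ) ^ (-(j : ℝ) * α) * (a j) ^ (1 / p) := by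
    intro j
    show (2 : ℝ) ^ (-(j : ℝ) * α) * H j ^ (1 / p) * sseq j
      = (2 : ℝ) ^ (-(j : ℝ) * α) * (H j * sseq j ^ p) ^ (1 / p)
    rw [Real.mul_rpow (hH0 j) (Real.rpow_nonneg (hs0 j) p),
      ← Real.rpow_mul (hs0 j), mul_one_div_cancel (ne_of_gt hp0), Real.rpow_one]
    ring
  set S := ∑' j : ℕ, (⨆ i ∈ Finset.range (j + 1),
      ENNReal.ofReal ((2 : ℝ) ^ ((i : ℝ) * n) * sseq i ^ p)) * μ (P j \ P (j + 1)) with hS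
  -- Step 2: `∑ a_j ≤ c⁻¹ S`
  have hB : ∑' j : ℕ, ENNReal.ofReal (a j) ≤ ENNReal.ofReal c⁻¹ * S := by
    rw [hS, ← ENNReal.tsum_mul_left]
    apply ENNReal.tsum_le_tsum
    intro j
    have h2pow : (2 : ℝ) ^ ((j : ℝ) * n) * (2 : ℝ) ^ (-(j : ℝ) * n) = 1 := by
      rw [← Real.rpow_add two_pos]
      norm_num
    have heq : a j = c⁻¹ * ((2 : ℝ) ^ ((j : ℝ) * n) * sseq j ^ p)
        * (c * (2 : ℝ) ^ (-(j : ℝ) * n) * H j) := by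
      have h : c⁻¹ * ((2 : ℝ) ^ ((j : ℝ) * n) * sseq j ^ p)
          * (c * (2 : ℝ) ^ (-(j : ℝ) * n) * H j)
          = (c⁻¹ * c) * ((2 : ℝ) ^ ((j : ℝ) * n) * (2 : ℝ) ^ (-(j : ℝ) * n))
            * (H j * sseq j ^ p) := by ring
      show H j * sseq j ^ p = _
      rw [h, inv_mul_cancel₀ (ne_of_gt hc), h2pow]
      ring
    have hx1 : (0:ℝ) ≤ (2 : ℝ) ^ ((j : ℝ) * n) * sseq j ^ p :=
      mul_nonneg (Real.rpow_pos_of_pos two_pos _).le (Real.rpow_nonneg (hs0 j) p)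
    rw [heq, ENNReal.ofReal_mul (mul_nonneg (inv_pos.mpr hc).le hx1),
      ENNReal.ofReal_mul (inv_pos.mpr hc).le, mul_assoc]
    refine mul_le_mul_right (mul_le_mul' ?_ (hHμ j)) _
    exact le_iSup₂ (f := fun i (_ : i ∈ Finset.range (j+1)) =>
      ENNReal.ofReal ((2 : ℝ) ^ ((i : ℝ) * n) * sseq i ^ p)) j
      (Finset.self_mem_range_succ j)
  -- combine
  calc ∑' j : ℕ, ENNReal.ofReal
          ((2 : ℝ) ^ (-(j : ℝ) * α) * H j ^ (1 / p) * sseq j)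
      = ∑' j : ℕ, ENNReal.ofReal ((2 : ℝ) ^ (-(j : ℝ) * α) * (a j) ^ (1 / p)) := by
        exact tsum_congr fun j => by rw [hterm j]
    _ ≤ ENNReal.ofReal C₀ * (∑' j : ℕ, ENNReal.ofReal (a j)) ^ (1 / p) := hC₀ a ha0
    _ ≤ ENNReal.ofReal C₀ * (ENNReal.ofReal c⁻¹ * S) ^ (1 / p) := by
        exact mul_le_mul_right (ENNReal.rpow_le_rpow hB (by positivity)) _
    _ = ENNReal.ofReal (C₀ * c⁻¹ ^ (1 / p)) * S ^ (1 / p) := by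
        rw [ENNReal.mul_rpow_of_nonneg _ _ (by positivity),
          ENNReal.ofReal_rpow_of_nonneg (by positivity) (by positivity),
          ENNReal.ofReal_mul hC₀pos.le, mul_assoc]
end
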